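/- In a QoS satisfaction game with homogeneous users (T_n^c = T^c for all n), a strategy profile with no suffering users in which the number of satisfied users equals min{N, ∑_{c=1}^C T^c} is a social optimum (maximizes total utility). -/
import Mathlib


open Finset

/-- Congestion level of channel `c`: number of players choosing `c`. -/
def cong {N C : ℕ} (x : Fin N → Option (Fin C)) (c : Fin C) : ℕ :=
  (Finset.univ.filter fun n => x n = some c).card

/-- Utility with homogeneous users: common threshold `T c` on each channel `c`. -/
def utilH {N C : ℕ} (T : Fin C → ℕ) (x : Fin N → Option (Fin C)) (n : Fin N) : ℤ :=
  match x n with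
  | none => 0
  | some c => if cong x c ≤ T c then 1 else -1

/-- Pure Nash equilibrium. -/
def IsNashH {N C : ℕ} (T : Fin C → ℕ) (x : Fin N → Option (Fin C)) : Prop :=
  ∀ (n : Fin N) (s : Option (Fin C)), utilH T (Function.update x n s) n ≤ utilH T x n

/-- Number of satisfied players. -/
def BH {N C : ℕ} (T : Fin C → ℕ) (x : Fin N → Option (Fin C)) : ℕ :=
  (Finset.univ.filter fun n => utilH T x n = 1).card

lemma util_le_ind {N C : ℕ} (T : Fin C → ℕ) (y : Fin N → Option (Fin C)) (n : Fin N) :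
    utilH T y n ≤ if utilH T y n = 1 then 1 else 0 := by
  cases hx : y n with
  | none => simp [utilH, hx]
  | some c => simp only [utilH, hx]; split_ifs <;> omega

lemma BH_le_sumT {N C : ℕ} (T : Fin C → ℕ) (y : Fin N → Option (Fin C)) :
    BH T y ≤ ∑ c : Fin C, T c := by
  classical
  have hfib := Finset.card_eq_sum_card_fiberwise
    (f := y) (s := univ.filter fun n => utilH T y n = 1) (t := (univ : Finset (Option (Fin C))))
    (fun n _ => mem_univ _)
  rw [BH, hfib, Fintype.sum_option]
  have h0 : ((univ.filter fun n => utilH T y n = 1).filter fun n => y n = none).card = 0 := by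
    rw [Finset.card_eq_zero, Finset.filter_eq_empty_iff]
    intro n hn hnone
    simp only [mem_filter, mem_univ, true_and] at hn
    rw [utilH, hnone] at hn
    simp at hn
  rw [h0, zero_add]
  apply Finset.sum_le_sum
  intro c _
  by_cases hne : ((univ.filter fun n => utilH T y n = 1).filter fun n => y n = some c).Nonempty
  · obtain ⟨n, hn⟩ := hne
    simp only [mem_filter, mem_univ, true_and] at hn
    obtain ⟨h1, h2⟩ := hn
    rw [utilH, h2] at h1
    have hc : cong y c ≤ T c := by
      by_contra h; simp [h] at h1
    calc ((univ.filter fun n => utilH T y n = 1).filter fun n => y n = some c).card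
        ≤ (univ.filter fun n => y n = some c).card := by
          apply Finset.card_le_card
          intro m hm
          simp only [mem_filter, mem_univ, true_and] at hm ⊢
          exact hm.2
      _ ≤ T c := hc
  · rw [Finset.not_nonempty_iff_eq_empty] at hne
    simp [hne]

/-- With homogeneous users, a profile with no suffering users in which the number of
satisfied users equals `min {N, ∑_c T^c}` is a social optimum. -/
theorem homog_optimal {N C : ℕ} (T : Fin C → ℕ) (x : Fin N → Option (Fin C))
    (hnat : ∀ n : Fin N, utilH T x n ≠ -1)
    (hB : BH T x = min N (∑ c : Fin C, T c)) :
    ∀ y : Fin N → Option (Fin C), ∑ n : Fin N, utilH T y n ≤ ∑ n : Fin N, utilH T x n := by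
  intro y
  classical
  have hval : ∀ n, utilH T x n = if utilH T x n = 1 then 1 else 0 := by
    intro n
    have h := hnat n
    cases hx : x n with
    | none => simp [utilH, hx]
    | some c =>
      simp only [utilH, hx] at h ⊢
      split_ifs at h ⊢ <;> omega
  have hx : ∑ n : Fin N, utilH T x n = (BH T x : ℤ) := by
    rw [BH, Finset.card_filter]
    push_cast
    exact Finset.sum_congr rfl fun n _ => hval n
  have hy : ∑ n : Fin N, utilH T y n ≤ (BH T y : ℤ) := by
    rw [BH, Finset.card_filter]
    push_cast
    exact Finset.sum_le_sum fun n _ => util_le_ind T y n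
  have hBy : BH T y ≤ BH T x := by
    rw [hB]
    exact le_min (le_trans (Finset.card_le_card (Finset.filter_subset _ _)) (by simp))
      (BH_le_sumT T y)
  rw [hx]
  exact le_trans hy (by exact_mod_cast hBy)
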